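/- Let K be a field of characteristic zero, V a K-vector space, Δ : V → V ⊗ V and β : V → V K-linear maps, and G a subgroup of the symmetric group S₃. If (V, Δ, β) is a G-Hom-coalgebra, i.e. Σ_{σ ∈ G} sgn(σ) Φ_σ ∘ c_β(Δ) = 0, then (V, Δ, β) is a Hom-Lie admissible Hom-coalgebra: c_β(Δ_L) + C ∘ c_β(Δ_L) + C² ∘ c_β(Δ_L) = 0, where Δ_L := Δ − τ ∘ Δ and C is the 3-cycle map a ⊗ b ⊗ c ↦ b ⊗ c ⊗ a. -/

import Mathlib

open TensorProduct

set_option linter.unusedSectionVars false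

section Defs

variable {K V : Type*} [Field K] [AddCommGroup V] [Module K V]

/-- The value of Φ_σ on a triple of vectors: x_{σ⁻¹(1)} ⊗ x_{σ⁻¹(2)} ⊗ x_{σ⁻¹(3)}
(indices taken in Fin 3). -/
noncomputable def phiFun (σ : Equiv.Perm (Fin 3)) (m : Fin 3 → V) :
    V ⊗[K] (V ⊗[K] V) :=
  m (σ⁻¹ 0) ⊗ₜ[K] (m (σ⁻¹ 1) ⊗ₜ[K] m (σ⁻¹ 2))

lemma fin3_cases (σ : Equiv.Perm (Fin 3)) (i : Fin 3) :
    i = σ⁻¹ 0 ∨ i = σ⁻¹ 1 ∨ i = σ⁻¹ 2 := by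
  have hk : ∀ k : Fin 3, k = 0 ∨ k = 1 ∨ k = 2 := by decide
  rcases hk (σ i) with h | h | h
  · left; rw [← h]; simp
  · right; left; rw [← h]; simp
  · right; right; rw [← h]; simp

lemma phiFun_update_add (σ : Equiv.Perm (Fin 3)) (m : Fin 3 → V) (i : Fin 3)
    (x y : V) :
    phiFun (K := K) σ (Function.update m i (x + y))
      = phiFun (K := K) σ (Function.update m i x)
        + phiFun (K := K) σ (Function.update m i y) := by
  rcases fin3_cases σ i with h | h | h <;> subst h <;>
    simp [phiFun, Function.update_apply, add_tmul, tmul_add]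

lemma phiFun_update_smul (σ : Equiv.Perm (Fin 3)) (m : Fin 3 → V) (i : Fin 3)
    (c : K) (x : V) :
    phiFun (K := K) σ (Function.update m i (c • x))
      = c • phiFun (K := K) σ (Function.update m i x) := by
  rcases fin3_cases σ i with h | h | h <;> subst h <;>
    simp [phiFun, Function.update_apply, smul_tmul, tmul_smul]

lemma update_vec0 (x y z w : V) : Function.update ![x, y, z] 0 w = ![w, y, z] := by
  funext j; fin_cases j <;> simp [Function.update]

lemma update_vec1 (x y z w : V) : Function.update ![x, y, z] 1 w = ![x, w, z] := by
  funext j; fin_cases j <;> simp [Function.update]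

lemma update_vec2 (x y z w : V) : Function.update ![x, y, z] 2 w = ![x, y, w] := by
  funext j; fin_cases j <;> simp [Function.update]

/-- Φ_σ as a trilinear map: (x₁, x₂, x₃) ↦ x_{σ⁻¹(1)} ⊗ x_{σ⁻¹(2)} ⊗ x_{σ⁻¹(3)}. -/
noncomputable def phiTri (σ : Equiv.Perm (Fin 3)) :
    V →ₗ[K] V →ₗ[K] V →ₗ[K] V ⊗[K] (V ⊗[K] V) :=
  LinearMap.mk₂ K
    (fun x y =>
      { toFun := fun z => phiFun (K := K) σ ![x, y, z]
        map_add' := fun z z' => by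
          have h := phiFun_update_add (K := K) (V := V) σ ![x, y, z] 2 z z'
          simpa [update_vec2] using h
        map_smul' := fun c z => by
          have h := phiFun_update_smul (K := K) (V := V) σ ![x, y, z] 2 c z
          simpa [update_vec2] using h })
    (fun x x' y => by
      ext z
      have h := phiFun_update_add (K := K) (V := V) σ ![x, y, z] 0 x x'
      simpa [update_vec0] using h)
    (fun c x y => by
      ext z
      have h := phiFun_update_smul (K := K) (V := V) σ ![x, y, z] 0 c x
      simpa [update_vec0] using h)
    (fun x y y' => by
      ext z
      have h := phiFun_update_add (K := K) (V := V) σ ![x, y, z] 1 y y'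
      simpa [update_vec1] using h)
    (fun c x y => by
      ext z
      have h := phiFun_update_smul (K := K) (V := V) σ ![x, y, z] 1 c y
      simpa [update_vec1] using h)

/-- Φ_σ : V ⊗ V ⊗ V → V ⊗ V ⊗ V, the linear map determined by
Φ_σ(x₁ ⊗ x₂ ⊗ x₃) = x_{σ⁻¹(1)} ⊗ x_{σ⁻¹(2)} ⊗ x_{σ⁻¹(3)}. -/
noncomputable def Phi (σ : Equiv.Perm (Fin 3)) :
    V ⊗[K] (V ⊗[K] V) →ₗ[K] V ⊗[K] (V ⊗[K] V) :=
  TensorProduct.lift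
    ((TensorProduct.lift.equiv (RingHom.id K) V V (V ⊗[K] (V ⊗[K] V))).toLinearMap ∘ₗ phiTri σ)

/-- Defining property of `Phi`. -/
lemma Phi_tmul (σ : Equiv.Perm (Fin 3)) (x y z : V) :
    Phi (K := K) σ (x ⊗ₜ[K] (y ⊗ₜ[K] z))
      = ![x, y, z] (σ⁻¹ 0) ⊗ₜ[K] (![x, y, z] (σ⁻¹ 1) ⊗ₜ[K] ![x, y, z] (σ⁻¹ 2)) := by
  simp [Phi, phiTri, phiFun]

/-- Δ^op := τ ∘ Δ, the opposite comultiplication. -/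
noncomputable def deltaOp (Δ : V →ₗ[K] V ⊗[K] V) : V →ₗ[K] V ⊗[K] V :=
  (TensorProduct.comm K V V).toLinearMap ∘ₗ Δ

/-- The β-coassociator c_β(Λ) := (Λ ⊗ β) ∘ Λ − (β ⊗ Λ) ∘ Λ, with values in
V ⊗ (V ⊗ V). -/
noncomputable def coassoc (Λ : V →ₗ[K] V ⊗[K] V) (β : V →ₗ[K] V) :
    V →ₗ[K] V ⊗[K] (V ⊗[K] V) :=
  (TensorProduct.assoc K V V V).toLinearMap ∘ₗ TensorProduct.map Λ β ∘ₗ Λ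
    - TensorProduct.map β Λ ∘ₗ Λ

variable (K V) in
/-- The 3-cycle map C : a ⊗ b ⊗ c ↦ b ⊗ c ⊗ a on V ⊗ (V ⊗ V). -/
noncomputable def cyc3 : V ⊗[K] (V ⊗[K] V) →ₗ[K] V ⊗[K] (V ⊗[K] V) :=
  (TensorProduct.assoc K V V V).toLinearMap
    ∘ₗ (TensorProduct.comm K V (V ⊗[K] V)).toLinearMap

end Defs

/-!
Write `L = assoc ∘ (Δ ⊗ β) ∘ Δ` and `R = (β ⊗ Δ) ∘ Δ`, so that `c_β(Δ) = L - R`. Composing with the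
flip only permutes tensor factors, which gives
`c_β(Δ - τΔ) = (1 - Φ₍₀₁₎)(L - C R) - (1 - Φ₍₁₂₎)(R - C² L)`.
For a transposition `t`, the coset decomposition `S₃ = A₃ ⊔ A₃ t` gives `(1 + C + C²)(1 - Φ_t) = A`
with `A = Σ_σ sgn σ Φ_σ`, and `A C = A` since `C` is even; so the cyclic sum of `c_β(Δ - τΔ)` is
`2 A c_β(Δ)`. Finally `A ∘ Σ_{g ∈ G} sgn g Φ_g = |G| A`, and `|G|` is invertible in characteristic
zero, so the `G`-Hom-coalgebra condition forces `A c_β(Δ) = 0`.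
-/

theorem Representation.sum_zsmul_eq_zero_of_sum_subgroup_eq_zero
    {K H W : Type*} [Field K] [CharZero K] [Group H] [Fintype H]
    [AddCommGroup W] [Module K W] (ρ : Representation K H W) (χ : H →* ℤˣ)
    (G : Subgroup H) [DecidablePred (· ∈ G)] {w : W}
    (hw : ∑ g ∈ Finset.univ.filter (· ∈ G), (χ g : ℤ) • ρ g w = 0) :
    ∑ h, (χ h : ℤ) • ρ h w = 0 := by
  set s := Finset.univ.filter (· ∈ G)
  have hshift : ∀ g, ∑ h, (χ h : ℤ) • ρ h ((χ g : ℤ) • ρ g w) = ∑ h, (χ h : ℤ) • ρ h w := by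
    intro g
    refine Fintype.sum_equiv (Equiv.mulRight g) _ _ fun h => ?_
    simp [map_mul, Module.End.mul_apply, smul_smul, mul_comm]
  have hcard : s.card • ∑ h, (χ h : ℤ) • ρ h w = 0 := calc
    _ = ∑ g ∈ s, ∑ h, (χ h : ℤ) • ρ h ((χ g : ℤ) • ρ g w) := by
      rw [← Finset.sum_const]
      exact Finset.sum_congr rfl fun g _ => (hshift g).symm
    _ = ∑ h, (χ h : ℤ) • ρ h (∑ g ∈ s, (χ g : ℤ) • ρ g w) := by
      simp only [map_sum, Finset.smul_sum]
      exact Finset.sum_comm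
    _ = 0 := by simp [hw]
  have hs : (s.card : K) ≠ 0 :=
    Nat.cast_ne_zero.mpr (Finset.card_pos.mpr ⟨1, by simp [s, G.one_mem]⟩).ne'
  rw [← Nat.cast_smul_eq_nsmul K] at hcard
  exact (smul_eq_zero.mp hcard).resolve_left hs

lemma sum_perm_fin_three {M : Type*} [AddCommMonoid M] (f : Equiv.Perm (Fin 3) → M) :
    ∑ σ, f σ = f 1 + f (finRotate 3) + f (finRotate 3)⁻¹
      + f (Equiv.swap 0 1) + f (Equiv.swap 0 2) + f (Equiv.swap 1 2) := by
  have huniv : (Finset.univ : Finset (Equiv.Perm (Fin 3)))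
      = {1, finRotate 3, (finRotate 3)⁻¹, Equiv.swap 0 1, Equiv.swap 0 2, Equiv.swap 1 2} := by
    decide
  rw [huniv, Finset.sum_insert (by decide), Finset.sum_insert (by decide),
    Finset.sum_insert (by decide), Finset.sum_insert (by decide), Finset.sum_insert (by decide),
    Finset.sum_singleton]
  simp only [add_assoc]

section PermutationAction

variable {K V : Type*} [Field K] [AddCommGroup V] [Module K V]

lemma Phi_tmul_of_fun (σ : Equiv.Perm (Fin 3)) (m : Fin 3 → V) :
    Phi (K := K) σ (m 0 ⊗ₜ[K] (m 1 ⊗ₜ[K] m 2))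
      = m (σ⁻¹ 0) ⊗ₜ[K] (m (σ⁻¹ 1) ⊗ₜ[K] m (σ⁻¹ 2)) := by
  have hm : ![m 0, m 1, m 2] = m := by
    funext k
    fin_cases k <;> rfl
  rw [Phi_tmul, hm]

lemma Phi_one : Phi (K := K) (V := V) 1 = LinearMap.id := by
  ext x y z
  simp [Phi_tmul]

lemma Phi_mul (σ τ : Equiv.Perm (Fin 3)) :
    Phi (K := K) (V := V) (σ * τ) = Phi σ ∘ₗ Phi τ := by
  ext x y z
  simp only [AlgebraTensorModule.curry_apply, curry_apply, LinearMap.coe_restrictScalars,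
    LinearMap.comp_apply, Phi_tmul, Phi_tmul_of_fun σ (fun k => ![x, y, z] (τ⁻¹ k)),
    mul_inv_rev, Equiv.Perm.mul_apply]

variable (K V)

noncomputable def phiRep : Representation K (Equiv.Perm (Fin 3)) (V ⊗[K] (V ⊗[K] V)) where
  toFun := Phi
  map_one' := Phi_one
  map_mul' := Phi_mul

noncomputable def antisymmetrizer : Module.End K (V ⊗[K] (V ⊗[K] V)) :=
  ∑ σ, (Equiv.Perm.sign σ : ℤ) • Phi σ

noncomputable def cyclicSum : Module.End K (V ⊗[K] (V ⊗[K] V)) :=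
  LinearMap.id + cyc3 K V + cyc3 K V ∘ₗ cyc3 K V

variable {K V}

lemma cyc3_tmul (x y z : V) : cyc3 K V (x ⊗ₜ[K] (y ⊗ₜ[K] z)) = y ⊗ₜ[K] (z ⊗ₜ[K] x) := rfl

lemma antisymmetrizer_tmul (x y z : V) :
    antisymmetrizer K V (x ⊗ₜ[K] (y ⊗ₜ[K] z))
      = x ⊗ₜ (y ⊗ₜ z) + z ⊗ₜ (x ⊗ₜ y) + y ⊗ₜ (z ⊗ₜ x)
        - y ⊗ₜ (x ⊗ₜ z) - z ⊗ₜ (y ⊗ₜ x) - x ⊗ₜ (z ⊗ₜ y) := by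
  simp [antisymmetrizer, sum_perm_fin_three, Phi_tmul, sign_finRotate, Equiv.swap_apply_def]
  abel

lemma cyclicSum_comp_sub_Phi_swap_zero_one :
    cyclicSum K V ∘ₗ (LinearMap.id - Phi (Equiv.swap 0 1)) = antisymmetrizer K V := by
  ext x y z
  simp [cyclicSum, antisymmetrizer_tmul, cyc3_tmul, Phi_tmul, Equiv.swap_apply_def]
  abel

lemma cyclicSum_comp_sub_Phi_swap_one_two :
    cyclicSum K V ∘ₗ (LinearMap.id - Phi (Equiv.swap 1 2)) = antisymmetrizer K V := by
  ext x y z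
  simp [cyclicSum, antisymmetrizer_tmul, cyc3_tmul, Phi_tmul, Equiv.swap_apply_def]
  abel

lemma antisymmetrizer_comp_cyc3 : antisymmetrizer K V ∘ₗ cyc3 K V = antisymmetrizer K V := by
  ext x y z
  simp [antisymmetrizer_tmul, cyc3_tmul]
  abel

end PermutationAction

section Coassociator

variable {K V : Type*} [Field K] [AddCommGroup V] [Module K V]

lemma assoc_comp_rTensor_comm :
    (TensorProduct.assoc K V V V).toLinearMap ∘ₗ (TensorProduct.comm K V V).toLinearMap.rTensor V
      = Phi (Equiv.swap 0 1) ∘ₗ (TensorProduct.assoc K V V V).toLinearMap := by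
  ext x y z
  simp [Phi_tmul, Equiv.swap_apply_def]

lemma lTensor_comm_eq_Phi :
    (TensorProduct.comm K V V).toLinearMap.lTensor V = Phi (Equiv.swap 1 2) := by
  ext x y z
  simp [Phi_tmul, Equiv.swap_apply_def]

lemma comm_eq_cyc3_comp_cyc3_comp_assoc :
    (TensorProduct.comm K (V ⊗[K] V) V).toLinearMap
      = (cyc3 K V ∘ₗ cyc3 K V) ∘ₗ (TensorProduct.assoc K V V V).toLinearMap := by
  ext x y z
  rfl

lemma coassoc_sub_deltaOp (Δ : V →ₗ[K] V ⊗[K] V) (β : V →ₗ[K] V) :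
    coassoc (Δ - deltaOp Δ) β
      = (LinearMap.id - Phi (Equiv.swap 0 1))
          ∘ₗ ((TensorProduct.assoc K V V V).toLinearMap ∘ₗ map Δ β ∘ₗ Δ
            - cyc3 K V ∘ₗ map β Δ ∘ₗ Δ)
        - (LinearMap.id - Phi (Equiv.swap 1 2))
          ∘ₗ (map β Δ ∘ₗ Δ - cyc3 K V ∘ₗ cyc3 K V
            ∘ₗ (TensorProduct.assoc K V V V).toLinearMap ∘ₗ map Δ β ∘ₗ Δ) := by
  have hleft : (TensorProduct.assoc K V V V).toLinearMap ∘ₗ map (Δ - deltaOp Δ) β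
      = (LinearMap.id - Phi (Equiv.swap 0 1))
          ∘ₗ (TensorProduct.assoc K V V V).toLinearMap ∘ₗ map Δ β := by
    have hmap : map (Δ - deltaOp Δ) β
        = map Δ β - (TensorProduct.comm K V V).toLinearMap.rTensor V ∘ₗ map Δ β := by
      ext x y
      simp [deltaOp, sub_tmul]
    rw [hmap, LinearMap.comp_sub, LinearMap.sub_comp, LinearMap.id_comp, ← LinearMap.comp_assoc,
      assoc_comp_rTensor_comm, LinearMap.comp_assoc]
  have hright : map β (Δ - deltaOp Δ) = (LinearMap.id - Phi (Equiv.swap 1 2)) ∘ₗ map β Δ := by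
    rw [← lTensor_comm_eq_Phi, LinearMap.sub_comp, LinearMap.id_comp]
    ext x y
    simp [deltaOp, tmul_sub]
  have hleft_flip : (TensorProduct.assoc K V V V).toLinearMap ∘ₗ map Δ β ∘ₗ deltaOp Δ
      = cyc3 K V ∘ₗ map β Δ ∘ₗ Δ := by
    rw [deltaOp, ← LinearMap.comp_assoc Δ, map_comp_comm_eq]
    rfl
  have hright_flip : map β Δ ∘ₗ deltaOp Δ
      = cyc3 K V ∘ₗ cyc3 K V ∘ₗ (TensorProduct.assoc K V V V).toLinearMap ∘ₗ map Δ β ∘ₗ Δ := by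
    rw [deltaOp, ← LinearMap.comp_assoc Δ, map_comp_comm_eq, comm_eq_cyc3_comp_cyc3_comp_assoc]
    rfl
  calc coassoc (Δ - deltaOp Δ) β
      = ((TensorProduct.assoc K V V V).toLinearMap ∘ₗ map (Δ - deltaOp Δ) β) ∘ₗ (Δ - deltaOp Δ)
        - map β (Δ - deltaOp Δ) ∘ₗ (Δ - deltaOp Δ) := rfl
    _ = _ := by
      rw [hleft, hright]
      simp only [LinearMap.comp_sub, LinearMap.comp_assoc, hleft_flip, hright_flip]

lemma cyclicSum_comp_coassoc_sub_deltaOp (Δ : V →ₗ[K] V ⊗[K] V) (β : V →ₗ[K] V) :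
    cyclicSum K V ∘ₗ coassoc (Δ - deltaOp Δ) β
      = (2 : ℤ) • (antisymmetrizer K V ∘ₗ coassoc Δ β) := by
  rw [coassoc_sub_deltaOp, LinearMap.comp_sub,
    ← LinearMap.comp_assoc _ (LinearMap.id - Phi (Equiv.swap 0 1)),
    ← LinearMap.comp_assoc _ (LinearMap.id - Phi (Equiv.swap 1 2)),
    cyclicSum_comp_sub_Phi_swap_zero_one, cyclicSum_comp_sub_Phi_swap_one_two]
  simp only [coassoc, LinearMap.comp_sub, ← LinearMap.comp_assoc, antisymmetrizer_comp_cyc3]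
  abel

end Coassociator

/-- over a field of characteristic zero, every G-Hom-coalgebra
(G a subgroup of S₃) is a Hom-Lie admissible Hom-coalgebra. -/
theorem stmt18 {K V : Type*} [Field K] [CharZero K] [AddCommGroup V] [Module K V]
    (Δ : V →ₗ[K] V ⊗[K] V) (β : V →ₗ[K] V)
    (G : Subgroup (Equiv.Perm (Fin 3))) [DecidablePred (· ∈ G)]
    (hG : ∑ σ ∈ Finset.univ.filter (· ∈ G),
        ((Equiv.Perm.sign σ : ℤ) • (Phi σ ∘ₗ coassoc Δ β)) = 0) :
    coassoc (Δ - deltaOp Δ) β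
      + cyc3 K V ∘ₗ coassoc (Δ - deltaOp Δ) β
      + (cyc3 K V ∘ₗ cyc3 K V) ∘ₗ coassoc (Δ - deltaOp Δ) β = 0 := by
  have hanti : antisymmetrizer K V ∘ₗ coassoc Δ β = 0 := by
    refine LinearMap.ext fun v => ?_
    have hv := LinearMap.congr_fun hG v
    simp only [LinearMap.sum_apply, LinearMap.smul_apply, LinearMap.comp_apply,
      LinearMap.zero_apply] at hv
    have hall : ∑ σ, (Equiv.Perm.sign σ : ℤ) • Phi σ (coassoc Δ β v) = 0 :=
      Representation.sum_zsmul_eq_zero_of_sum_subgroup_eq_zero (phiRep K V) Equiv.Perm.sign G hv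
    simpa [antisymmetrizer, LinearMap.sum_apply] using hall
  have h := cyclicSum_comp_coassoc_sub_deltaOp Δ β
  rwa [hanti, smul_zero, cyclicSum, LinearMap.add_comp, LinearMap.add_comp,
    LinearMap.id_comp] at h
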